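/- Let L∈ℕ, M₀∈ℝ³ with ‖M₀‖≤1, and let {M_ℓ(θ)}_{ℓ=1}^{L} be the IR-bSSFP discrete Bloch dynamics with flip angles {α_ℓ}, phase shifts {φ_ℓ} and repetition times {TR_ℓ>0}. Then for every ℓ∈{1,…,L} there exists a constant C_ℓ>0, depending only on TR₁,…,TR_ℓ (and not on θ), such that the operator norm of the Fréchet derivative satisfies ‖M_ℓ′(θ)‖ ≤ C_ℓ for all θ∈(0,∞)²; i.e., ‖M_ℓ′(θ)h‖ ≤ C_ℓ‖h‖ for all h∈ℝ². -/

import Mathlib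

open Matrix

/-- The equilibrium magnetization `M_e = (0,0,1)`. -/
noncomputable def Me : Fin 3 → ℝ := ![0, 0, 1]

/-- `E₁(TR,θ) = diag(e^{−TR/T₂}, e^{−TR/T₂}, e^{−TR/T₁})`. -/
noncomputable def E1 (TR T1 T2 : ℝ) : Matrix (Fin 3) (Fin 3) ℝ :=
  Matrix.diagonal ![Real.exp (-TR / T2), Real.exp (-TR / T2), Real.exp (-TR / T1)]

/-- `E₂(TR,θ) = 1 − e^{−TR/T₁}`. -/
noncomputable def E2 (TR T1 : ℝ) : ℝ := 1 - Real.exp (-TR / T1)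

/-- The phase-shift rotation `R_φ`. -/
noncomputable def Rphi (φ : ℝ) : Matrix (Fin 3) (Fin 3) ℝ :=
  !![Real.cos φ, Real.sin φ, 0; -Real.sin φ, Real.cos φ, 0; 0, 0, 1]

/-- The flip-angle rotation `R_x(α)`. -/
noncomputable def Rx (α : ℝ) : Matrix (Fin 3) (Fin 3) ℝ :=
  !![1, 0, 0; 0, Real.cos α, Real.sin α; 0, -Real.sin α, Real.cos α]

/-- `R(α) := R_φ R_x(α) R_φᵀ`. -/
noncomputable def Rmat (φ α : ℝ) : Matrix (Fin 3) (Fin 3) ℝ := Rphi φ * Rx α * (Rphi φ)ᵀ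

/-- The IR-bSSFP discrete Bloch dynamics:
`M₀` given, `M_ℓ = E₁(TR_ℓ,θ) R(α_ℓ) M_{ℓ−1} + E₂(TR_ℓ,θ) M_e`. -/
noncomputable def Mseq (α φ TR : ℕ → ℝ) (T1 T2 : ℝ) (M0 : Fin 3 → ℝ) : ℕ → Fin 3 → ℝ
  | 0 => M0
  | ℓ + 1 =>
      (E1 (TR (ℓ + 1)) T1 T2 * Rmat (φ (ℓ + 1)) (α (ℓ + 1))) *ᵥ Mseq α φ TR T1 T2 M0 ℓ
        + E2 (TR (ℓ + 1)) T1 • Me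

/-- `U₁(ℓ) = diag(0, 0, (TR_ℓ/T₁²) e^{−TR_ℓ/T₁}) R(α_ℓ)`. -/
noncomputable def U1 (TRl φl αl T1 : ℝ) : Matrix (Fin 3) (Fin 3) ℝ :=
  Matrix.diagonal ![0, 0, TRl / T1 ^ 2 * Real.exp (-TRl / T1)] * Rmat φl αl

/-- `U₂(ℓ) = diag((TR_ℓ/T₂²) e^{−TR_ℓ/T₂}, (TR_ℓ/T₂²) e^{−TR_ℓ/T₂}, 0) R(α_ℓ)`. -/
noncomputable def U2 (TRl φl αl T2 : ℝ) : Matrix (Fin 3) (Fin 3) ℝ :=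
  Matrix.diagonal ![TRl / T2 ^ 2 * Real.exp (-TRl / T2),
    TRl / T2 ^ 2 * Real.exp (-TRl / T2), 0] * Rmat φl αl

/-- The recursion for `∂M_ℓ/∂T₁`:
`∂M_ℓ/∂T₁ = U₁(ℓ) M_{ℓ−1} + E₁(TR_ℓ)R(α_ℓ) ∂M_{ℓ−1}/∂T₁ − (TR_ℓ/T₁²)e^{−TR_ℓ/T₁} M_e`,
with `∂M₀/∂T₁ = 0`. -/
noncomputable def D1 (α φ TR : ℕ → ℝ) (T1 T2 : ℝ) (M0 : Fin 3 → ℝ) : ℕ → Fin 3 → ℝ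
  | 0 => 0
  | ℓ + 1 =>
      U1 (TR (ℓ + 1)) (φ (ℓ + 1)) (α (ℓ + 1)) T1 *ᵥ Mseq α φ TR T1 T2 M0 ℓ
        + (E1 (TR (ℓ + 1)) T1 T2 * Rmat (φ (ℓ + 1)) (α (ℓ + 1))) *ᵥ D1 α φ TR T1 T2 M0 ℓ
        - (TR (ℓ + 1) / T1 ^ 2 * Real.exp (-TR (ℓ + 1) / T1)) • Me

/-- The recursion for `∂M_ℓ/∂T₂`:
`∂M_ℓ/∂T₂ = U₂(ℓ) M_{ℓ−1} + E₁(TR_ℓ)R(α_ℓ) ∂M_{ℓ−1}/∂T₂`, with `∂M₀/∂T₂ = 0`. -/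
noncomputable def D2 (α φ TR : ℕ → ℝ) (T1 T2 : ℝ) (M0 : Fin 3 → ℝ) : ℕ → Fin 3 → ℝ
  | 0 => 0
  | ℓ + 1 =>
      U2 (TR (ℓ + 1)) (φ (ℓ + 1)) (α (ℓ + 1)) T2 *ᵥ Mseq α φ TR T1 T2 M0 ℓ
        + (E1 (TR (ℓ + 1)) T1 T2 * Rmat (φ (ℓ + 1)) (α (ℓ + 1))) *ᵥ D2 α φ TR T1 T2 M0 ℓ


/-- The Euclidean norm on `ℝ³`. -/
noncomputable def enorm3 (v : Fin 3 → ℝ) : ℝ := Real.sqrt (∑ i, v i ^ 2)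

/-- The Euclidean norm on `ℝ²`. -/
noncomputable def enorm2 (v : ℝ × ℝ) : ℝ := Real.sqrt (v.1 ^ 2 + v.2 ^ 2)

/-!
`R(α)` is a rotation and `E₁` a diagonal contraction, so each step of the dynamics adds at most
`|E₂| ≤ 1` to the norm and `‖M_ℓ‖ ≤ 1 + ℓ`. The `T`-derivative of a relaxation factor is
`(TR/T²) e^{−TR/T} = x² e^{−x} / TR` with `x = TR/T`, and `x² ≤ 2 eˣ` bounds it by `2/TR`
independently of `T`. Feeding both bounds into the derivative recursions, step `k + 1` adds at
most `2(k + 2)/TR_{k+1}` to `‖∂M/∂T_i‖`, which yields a constant depending only on the `TR_k`.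
-/

open WithLp Finset

theorem le_add_sum_range_of_le_add {α : Type*} [AddCommMonoid α] [PartialOrder α]
    [IsOrderedAddMonoid α] {u b : ℕ → α} (h : ∀ n, u (n + 1) ≤ u n + b n) :
    ∀ n, u n ≤ u 0 + ∑ k ∈ range n, b k
  | 0 => by simp
  | n + 1 => by
    rw [sum_range_succ, ← add_assoc]
    exact (h n).trans (add_le_add_left (le_add_sum_range_of_le_add h n) _)

theorem sq_mul_exp_neg_le_two {x : ℝ} (hx : 0 ≤ x) : x ^ 2 * Real.exp (-x) ≤ 2 := by
  have h := Real.pow_div_factorial_le_exp x hx 2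
  rw [Real.exp_neg, ← div_eq_mul_inv, div_le_iff₀ (Real.exp_pos x)]
  norm_num [Nat.factorial] at h
  linarith

theorem Matrix.norm_toLp_mulVec_of_mem_unitaryGroup {ι : Type*} [Fintype ι] [DecidableEq ι]
    {U : Matrix ι ι ℝ} (hU : U ∈ Matrix.unitaryGroup ι ℝ) (v : ι → ℝ) :
    ‖toLp 2 (U *ᵥ v)‖ = ‖toLp 2 v‖ := by
  rw [← Matrix.toEuclideanCLM_toLp]
  exact ContinuousLinearMap.norm_map_of_mem_unitary (Unitary.map_mem _ hU) _

theorem Matrix.norm_toLp_diagonal_mulVec_le {ι : Type*} [Fintype ι] [DecidableEq ι]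
    {d : ι → ℝ} {c : ℝ} (hc : 0 ≤ c) (hd : ∀ i, |d i| ≤ c) (v : ι → ℝ) :
    ‖toLp 2 (diagonal d *ᵥ v)‖ ≤ c * ‖toLp 2 v‖ := by
  rw [EuclideanSpace.norm_eq, EuclideanSpace.norm_eq, ← Real.sqrt_sq hc,
    ← Real.sqrt_mul (sq_nonneg c), mul_sum]
  gcongr with i
  simp only [mulVec_diagonal, Real.norm_eq_abs, abs_mul, mul_pow]
  gcongr
  exact hd i

theorem enorm3_eq_norm (v : Fin 3 → ℝ) : enorm3 v = ‖toLp 2 v‖ := by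
  simp [enorm3, EuclideanSpace.norm_eq]

theorem enorm3_add_le (v w : Fin 3 → ℝ) : enorm3 (v + w) ≤ enorm3 v + enorm3 w := by
  simpa only [enorm3_eq_norm, toLp_add] using norm_add_le _ _

theorem enorm3_sub_le (v w : Fin 3 → ℝ) : enorm3 (v - w) ≤ enorm3 v + enorm3 w := by
  simpa only [enorm3_eq_norm, toLp_sub] using norm_sub_le _ _

theorem enorm3_smul (c : ℝ) (v : Fin 3 → ℝ) : enorm3 (c • v) = |c| * enorm3 v := by
  simp only [enorm3_eq_norm, toLp_smul, norm_smul, Real.norm_eq_abs]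

theorem enorm3_smul_Me (c : ℝ) : enorm3 (c • Me) = |c| := by
  simp [enorm3, Me, Fin.sum_univ_three, Real.sqrt_sq_eq_abs]

theorem abs_fst_le_enorm2 (h : ℝ × ℝ) : |h.1| ≤ enorm2 h :=
  Real.abs_le_sqrt (le_add_of_nonneg_right (sq_nonneg _))

theorem abs_snd_le_enorm2 (h : ℝ × ℝ) : |h.2| ≤ enorm2 h :=
  Real.abs_le_sqrt (le_add_of_nonneg_left (sq_nonneg _))

theorem Rphi_mem_orthogonalGroup (φ : ℝ) : Rphi φ ∈ orthogonalGroup (Fin 3) ℝ := by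
  rw [mem_orthogonalGroup_iff]
  ext i j
  fin_cases i <;> fin_cases j <;> simp [Rphi, mul_apply, Fin.sum_univ_three] <;>
    nlinarith [Real.sin_sq_add_cos_sq φ]

theorem Rx_mem_orthogonalGroup (α : ℝ) : Rx α ∈ orthogonalGroup (Fin 3) ℝ := by
  rw [mem_orthogonalGroup_iff]
  ext i j
  fin_cases i <;> fin_cases j <;> simp [Rx, mul_apply, Fin.sum_univ_three] <;>
    nlinarith [Real.sin_sq_add_cos_sq α]

theorem Rmat_mem_orthogonalGroup (φ α : ℝ) : Rmat φ α ∈ orthogonalGroup (Fin 3) ℝ :=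
  mul_mem (mul_mem (Rphi_mem_orthogonalGroup φ) (Rx_mem_orthogonalGroup α))
    (Unitary.star_mem (Rphi_mem_orthogonalGroup φ))

theorem enorm3_Rmat_mulVec (φ α : ℝ) (v : Fin 3 → ℝ) : enorm3 (Rmat φ α *ᵥ v) = enorm3 v := by
  simp only [enorm3_eq_norm, norm_toLp_mulVec_of_mem_unitaryGroup (Rmat_mem_orthogonalGroup φ α)]

section Relaxation

variable {TR T : ℝ}

theorem abs_exp_neg_div_le_one (hTR : 0 < TR) (hT : 0 < T) : |Real.exp (-TR / T)| ≤ 1 := by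
  rw [abs_of_pos (Real.exp_pos _), Real.exp_le_one_iff, neg_div, neg_nonpos]
  positivity

theorem abs_E2_le_one (hTR : 0 < TR) (hT : 0 < T) : |E2 TR T| ≤ 1 := by
  have := abs_exp_neg_div_le_one hTR hT
  rw [abs_le] at this ⊢
  have := Real.exp_pos (-TR / T)
  unfold E2
  constructor <;> linarith

theorem abs_relaxRate_le (hTR : 0 < TR) (hT : 0 < T) :
    |TR / T ^ 2 * Real.exp (-TR / T)| ≤ 2 / TR := by
  have key : TR / T ^ 2 * Real.exp (-TR / T) = (TR / T) ^ 2 * Real.exp (-(TR / T)) / TR := by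
    rw [neg_div]; field_simp
  rw [key, abs_of_nonneg (by positivity)]
  exact div_le_div_of_nonneg_right (sq_mul_exp_neg_le_two (by positivity)) hTR.le

end Relaxation

section Dynamics

variable {TR : ℝ} {T1 T2 : ℝ}

theorem enorm3_E1_Rmat_mulVec_le (hTR : 0 < TR) (h1 : 0 < T1) (h2 : 0 < T2) (φ α : ℝ)
    (v : Fin 3 → ℝ) : enorm3 ((E1 TR T1 T2 * Rmat φ α) *ᵥ v) ≤ enorm3 v := by
  rw [← mulVec_mulVec, ← enorm3_Rmat_mulVec φ α v, enorm3_eq_norm, enorm3_eq_norm, E1]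
  refine (norm_toLp_diagonal_mulVec_le zero_le_one (fun i => ?_) _).trans_eq (one_mul _)
  fin_cases i
  exacts [abs_exp_neg_div_le_one hTR h2, abs_exp_neg_div_le_one hTR h2,
    abs_exp_neg_div_le_one hTR h1]

theorem enorm3_U1_mulVec_le (hTR : 0 < TR) (h1 : 0 < T1) (φ α : ℝ) (v : Fin 3 → ℝ) :
    enorm3 (U1 TR φ α T1 *ᵥ v) ≤ 2 / TR * enorm3 v := by
  rw [U1, ← mulVec_mulVec, ← enorm3_Rmat_mulVec φ α v, enorm3_eq_norm, enorm3_eq_norm]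
  refine norm_toLp_diagonal_mulVec_le (by positivity) (fun i => ?_) _
  fin_cases i
  exacts [by simpa using (div_pos two_pos hTR).le, by simpa using (div_pos two_pos hTR).le,
    abs_relaxRate_le hTR h1]

theorem enorm3_U2_mulVec_le (hTR : 0 < TR) (h2 : 0 < T2) (φ α : ℝ) (v : Fin 3 → ℝ) :
    enorm3 (U2 TR φ α T2 *ᵥ v) ≤ 2 / TR * enorm3 v := by
  rw [U2, ← mulVec_mulVec, ← enorm3_Rmat_mulVec φ α v, enorm3_eq_norm, enorm3_eq_norm]
  refine norm_toLp_diagonal_mulVec_le (by positivity) (fun i => ?_) _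
  fin_cases i
  exacts [abs_relaxRate_le hTR h2, abs_relaxRate_le hTR h2,
    by simpa using (div_pos two_pos hTR).le]

end Dynamics

section Sequences

variable {α φ TR : ℕ → ℝ} {T1 T2 : ℝ} {M0 : Fin 3 → ℝ}

theorem enorm3_Mseq_le (hTR : ∀ ℓ, 0 < TR ℓ) (h1 : 0 < T1) (h2 : 0 < T2)
    (hM0 : enorm3 M0 ≤ 1) (ℓ : ℕ) : enorm3 (Mseq α φ TR T1 T2 M0 ℓ) ≤ 1 + ℓ := by
  have step (n : ℕ) : enorm3 (Mseq α φ TR T1 T2 M0 (n + 1)) ≤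
      enorm3 (Mseq α φ TR T1 T2 M0 n) + 1 := by
    refine (enorm3_add_le _ _).trans
      (add_le_add (enorm3_E1_Rmat_mulVec_le (hTR _) h1 h2 _ _ _) ?_)
    rw [enorm3_smul_Me]
    exact abs_E2_le_one (hTR _) h1
  have := le_add_sum_range_of_le_add (u := fun n => enorm3 (Mseq α φ TR T1 T2 M0 n)) step ℓ
  simp only [sum_const, card_range, nsmul_eq_mul, mul_one] at this
  exact this.trans (add_le_add_left (show enorm3 (Mseq α φ TR T1 T2 M0 0) ≤ 1 from hM0) _)

theorem enorm3_D1_le (hTR : ∀ ℓ, 0 < TR ℓ) (h1 : 0 < T1) (h2 : 0 < T2)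
    (hM0 : enorm3 M0 ≤ 1) (ℓ : ℕ) :
    enorm3 (D1 α φ TR T1 T2 M0 ℓ) ≤ ∑ k ∈ range ℓ, 2 * (k + 2) / TR (k + 1) := by
  have step (n : ℕ) : enorm3 (D1 α φ TR T1 T2 M0 (n + 1)) ≤
      enorm3 (D1 α φ TR T1 T2 M0 n) + 2 * (n + 2) / TR (n + 1) := by
    have hU := (enorm3_U1_mulVec_le (hTR (n + 1)) h1 (φ (n + 1)) (α (n + 1))
      (Mseq α φ TR T1 T2 M0 n)).trans
      (mul_le_mul_of_nonneg_left (enorm3_Mseq_le hTR h1 h2 hM0 n) (div_pos two_pos (hTR _)).le)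
    have hE := enorm3_E1_Rmat_mulVec_le (hTR (n + 1)) h1 h2 (φ (n + 1)) (α (n + 1))
      (D1 α φ TR T1 T2 M0 n)
    have hMe := abs_relaxRate_le (hTR (n + 1)) h1
    rw [← enorm3_smul_Me] at hMe
    calc enorm3 (D1 α φ TR T1 T2 M0 (n + 1))
        ≤ _ + _ + _ := (enorm3_sub_le _ _).trans (add_le_add_left (enorm3_add_le _ _) _)
      _ ≤ 2 / TR (n + 1) * (1 + n) + enorm3 (D1 α φ TR T1 T2 M0 n) + 2 / TR (n + 1) :=
        add_le_add (add_le_add hU hE) hMe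
      _ = _ := by ring
  simpa [D1, enorm3_eq_norm] using
    le_add_sum_range_of_le_add (u := fun n => enorm3 (D1 α φ TR T1 T2 M0 n)) step ℓ

theorem enorm3_D2_le (hTR : ∀ ℓ, 0 < TR ℓ) (h1 : 0 < T1) (h2 : 0 < T2)
    (hM0 : enorm3 M0 ≤ 1) (ℓ : ℕ) :
    enorm3 (D2 α φ TR T1 T2 M0 ℓ) ≤ ∑ k ∈ range ℓ, 2 * (k + 2) / TR (k + 1) := by
  have step (n : ℕ) : enorm3 (D2 α φ TR T1 T2 M0 (n + 1)) ≤
      enorm3 (D2 α φ TR T1 T2 M0 n) + 2 * (n + 2) / TR (n + 1) := by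
    have hU := (enorm3_U2_mulVec_le (hTR (n + 1)) h2 (φ (n + 1)) (α (n + 1))
      (Mseq α φ TR T1 T2 M0 n)).trans
      (mul_le_mul_of_nonneg_left (enorm3_Mseq_le hTR h1 h2 hM0 n) (div_pos two_pos (hTR _)).le)
    have hE := enorm3_E1_Rmat_mulVec_le (hTR (n + 1)) h1 h2 (φ (n + 1)) (α (n + 1))
      (D2 α φ TR T1 T2 M0 n)
    have hTR' := div_pos two_pos (hTR (n + 1))
    calc enorm3 (D2 α φ TR T1 T2 M0 (n + 1))
        ≤ 2 / TR (n + 1) * (1 + n) + enorm3 (D2 α φ TR T1 T2 M0 n) :=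
        (enorm3_add_le _ _).trans (add_le_add hU hE)
      _ ≤ 2 / TR (n + 1) * (1 + n) + enorm3 (D2 α φ TR T1 T2 M0 n) + 2 / TR (n + 1) := by
        linarith
      _ = _ := by ring
  simpa [D2, enorm3_eq_norm] using
    le_add_sum_range_of_le_add (u := fun n => enorm3 (D2 α φ TR T1 T2 M0 n)) step ℓ

end Sequences

theorem stmt8_general (TR : ℕ → ℝ) (hTR : ∀ ℓ, 0 < TR ℓ) (ℓ : ℕ) :
    ∃ C > 0, ∀ (α φ : ℕ → ℝ) (M0 : Fin 3 → ℝ), enorm3 M0 ≤ 1 →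
      ∀ T1 T2 : ℝ, 0 < T1 → 0 < T2 → ∀ h : ℝ × ℝ,
        enorm3 (h.1 • D1 α φ TR T1 T2 M0 ℓ + h.2 • D2 α φ TR T1 T2 M0 ℓ)
          ≤ C * enorm2 h := by
  set B := ∑ k ∈ range ℓ, 2 * (k + 2) / TR (k + 1)
  have hB : 0 ≤ B := sum_nonneg fun k _ => (div_pos (by positivity) (hTR _)).le
  refine ⟨2 * B + 1, by positivity, fun α φ M0 hM0 T1 T2 h1 h2 h => ?_⟩
  have hh : 0 ≤ enorm2 h := Real.sqrt_nonneg _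
  calc enorm3 (h.1 • D1 α φ TR T1 T2 M0 ℓ + h.2 • D2 α φ TR T1 T2 M0 ℓ)
      ≤ |h.1| * enorm3 (D1 α φ TR T1 T2 M0 ℓ) + |h.2| * enorm3 (D2 α φ TR T1 T2 M0 ℓ) := by
        rw [← enorm3_smul, ← enorm3_smul]
        exact enorm3_add_le _ _
    _ ≤ enorm2 h * B + enorm2 h * B :=
        add_le_add
          (mul_le_mul (abs_fst_le_enorm2 h) (enorm3_D1_le hTR h1 h2 hM0 ℓ) (Real.sqrt_nonneg _) hh)
          (mul_le_mul (abs_snd_le_enorm2 h) (enorm3_D2_le hTR h1 h2 hM0 ℓ) (Real.sqrt_nonneg _) hh)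
    _ ≤ (2 * B + 1) * enorm2 h := by nlinarith

/-- Uniform bound on the operator norm of the Fréchet derivative of the IR-bSSFP map
`θ ↦ M_ℓ(θ)` (whose action is `M_ℓ′(θ)h = h₁ ∂M_ℓ/∂T₁ + h₂ ∂M_ℓ/∂T₂`): for `‖M₀‖ ≤ 1`
there is `C_ℓ > 0`, depending only on `TR₁,…,TR_ℓ` (not on `θ`), with
`‖M_ℓ′(θ)h‖ ≤ C_ℓ ‖h‖` for all `θ ∈ (0,∞)²` and all `h ∈ ℝ²`. -/
theorem stmt8 (TR : ℕ → ℝ) (hTR : ∀ ℓ, 0 < TR ℓ) (L : ℕ)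
    (ℓ : ℕ) (hℓ1 : 1 ≤ ℓ) (hℓL : ℓ ≤ L) :
    ∃ C > 0, ∀ (α φ : ℕ → ℝ) (M0 : Fin 3 → ℝ), enorm3 M0 ≤ 1 →
      ∀ T1 T2 : ℝ, 0 < T1 → 0 < T2 → ∀ h : ℝ × ℝ,
        enorm3 (h.1 • D1 α φ TR T1 T2 M0 ℓ + h.2 • D2 α φ TR T1 T2 M0 ℓ)
          ≤ C * enorm2 h :=
  stmt8_general TR hTR ℓ
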